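/- arXiv:1902.00304 — 3 statements merged into one kernel-verified Lean document; each statement's English description precedes it below -/
import Mathlib

section
/- Let T be a minimum spanning tree of a finite connected edge-weighted graph G = (V,E,w) with strictly positive weights, and let G_δ = (V, E ∪ E_δ, w') be the graph obtained from G by adding a set E_δ of δ new edges with strictly positive weights, where E ∩ E_δ = ∅ and w' extends w to E ∪ E_δ. Then there exists a minimum spanning tree T* of G_δ with T* ⊆ T ∪ E_δ, i.e., a minimum spanning tree of G_δ that can be obtained by removing δ edges from T ∪ E_δ. -/
/-! Graphs on a finite vertex type `V` are given by finite sets of (non-loop)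
unordered edges `Finset (Sym2 V)`; an edge set `F` spans the graph
`SimpleGraph.fromEdgeSet ↑F` on `V`. -/

open SimpleGraph

variable {V : Type*} [Fintype V] [DecidableEq V]

/-- `F` is a spanning tree (of whatever graph contains its edges): the graph
`(V, F)` is connected and acyclic. -/
def IsSpanningTree (F : Finset (Sym2 V)) : Prop :=
  (SimpleGraph.fromEdgeSet (F : Set (Sym2 V))).Connected ∧
    (SimpleGraph.fromEdgeSet (F : Set (Sym2 V))).IsAcyclic

def edgeWeight (w : Sym2 V → ℝ) (F : Finset (Sym2 V)) : ℝ := ∑ e ∈ F, w e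

def IsMST (E : Finset (Sym2 V)) (w : Sym2 V → ℝ) (T : Finset (Sym2 V)) : Prop :=
  T ⊆ E ∧ IsSpanningTree T ∧
    ∀ T' : Finset (Sym2 V), T' ⊆ E → IsSpanningTree T' → edgeWeight w T ≤ edgeWeight w T'

/-! Instead of spanning trees we work with minimum-weight connected edge sets: with positive
weights every edge of such a set is a bridge, so it is a minimum spanning tree. Let `F` be one
in `E ∪ Eδ` and `e = s(a, b)` an edge of `F` outside `T ∪ Eδ`, so `e ∈ E \ T`. The path from
`a` to `b` in the tree `T` crosses the cut of `F - e` in an edge `f`, and `e` crosses the cut of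
`T - f`, so both `F - e + f` and `T - f + e` are connected. Minimality of `T` gives `w f ≤ w e`,
hence `F - e + f` is again of minimum weight, with one edge fewer outside `T ∪ Eδ`. Finally `T`
and the resulting tree both have `|V| - 1` edges, which accounts for the `δ` removed edges. -/

section

variable {α : Type*}

namespace SimpleGraph

variable {G H : SimpleGraph α} {a b c d : α}

lemma Connected.reachable_deleteEdges_or (hG : G.Connected) (z : α) :
    (G.deleteEdges {s(a, b)}).Reachable z a ∨ (G.deleteEdges {s(a, b)}).Reachable z b := by
  classical
  obtain ⟨p, hp⟩ := hG.exists_isPath z a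
  by_cases hab : s(a, b) ∈ p.edges
  · have hb := p.snd_mem_support_of_mem_edges hab
    have ha := Walk.endpoint_notMem_support_takeUntil hp hb (p.adj_of_mem_edges hab).ne
    refine .inr ⟨(p.takeUntil b hb).toDeleteEdges _ fun e he => ?_⟩
    rintro rfl
    exact ha ((p.takeUntil b hb).fst_mem_support_of_mem_edges he)
  · exact .inl ⟨p.toDeleteEdges _ fun e he h => hab (h ▸ he)⟩

lemma Connected.deleteEdges_sup_edge (hG : G.Connected)
    (h : ¬ (G.deleteEdges {s(a, b)}).Reachable c d) :
    (G.deleteEdges {s(a, b)} ⊔ edge c d).Connected := by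
  have hle : G.deleteEdges {s(a, b)} ≤ G.deleteEdges {s(a, b)} ⊔ edge c d := le_sup_left
  have hcd : (G.deleteEdges {s(a, b)} ⊔ edge c d).Reachable c d :=
    Adj.reachable (Or.inr ((edge_adj ..).2 ⟨Or.inl ⟨rfl, rfl⟩, fun h' => h (h' ▸ .rfl)⟩))
  have hab : (G.deleteEdges {s(a, b)} ⊔ edge c d).Reachable a b := by
    rcases hG.reachable_deleteEdges_or (a := a) (b := b) c with hc | hc <;>
      rcases hG.reachable_deleteEdges_or (a := a) (b := b) d with hd | hd
    · exact absurd (hc.trans hd.symm) h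
    · exact (hc.mono hle).symm.trans (hcd.trans (hd.mono hle))
    · exact (hd.mono hle).symm.trans (hcd.symm.trans (hc.mono hle))
    · exact absurd (hc.trans hd.symm) h
  refine (connected_iff_exists_forall_reachable _).2 ⟨a, fun z => ?_⟩
  rcases hG.reachable_deleteEdges_or (a := a) (b := b) z with hz | hz
  · exact (hz.mono hle).symm
  · exact hab.trans (hz.mono hle).symm

lemma IsAcyclic.not_reachable_deleteEdges_of_mem_edges (hG : G.IsAcyclic) {p : G.Walk a b}
    (hp : p.IsPath) (h : s(c, d) ∈ p.edges) : ¬ (G.deleteEdges {s(c, d)}).Reachable a b := by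
  classical
  rw [reachable_deleteEdges_iff_exists_walk]
  rintro ⟨q, hq⟩
  have : p = q.toPath := congrArg Subtype.val ((hG.subsingleton_path a b).elim ⟨p, hp⟩ q.toPath)
  exact hq (q.edges_toPath_subset_edges (this ▸ h))

lemma IsBridge.exists_symmetric_exchange (hb : G.IsBridge s(a, b)) (hH : H.IsTree) :
    ∃ c d, H.Adj c d ∧ ¬ (G.deleteEdges {s(a, b)}).Reachable c d ∧
      ¬ (H.deleteEdges {s(c, d)}).Reachable a b := by
  obtain ⟨p, hp⟩ := hH.connected.exists_isPath a b
  obtain ⟨⟨⟨c, d⟩, hcd⟩, hdp, hc, hd⟩ :=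
    p.exists_boundary_dart {z | (G.deleteEdges {s(a, b)}).Reachable a z} .rfl hb
  refine ⟨c, d, hcd, fun h => hd (hc.trans h), ?_⟩
  exact hH.isAcyclic.not_reachable_deleteEdges_of_mem_edges hp (List.mem_map_of_mem hdp)

end SimpleGraph

lemma fromEdgeSet_coe_erase [DecidableEq α] (F : Finset (Sym2 α)) (e : Sym2 α) :
    fromEdgeSet ((F.erase e : Finset (Sym2 α)) : Set (Sym2 α)) =
      (fromEdgeSet (F : Set (Sym2 α))).deleteEdges {e} := by
  rw [Finset.coe_erase, fromEdgeSet_sdiff, deleteEdges]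

lemma fromEdgeSet_coe_insert_erase [DecidableEq α] (F : Finset (Sym2 α)) (e : Sym2 α)
    (c d : α) :
    fromEdgeSet ((insert s(c, d) (F.erase e) : Finset (Sym2 α)) : Set (Sym2 α)) =
      (fromEdgeSet (F : Set (Sym2 α))).deleteEdges {e} ⊔ edge c d := by
  rw [Finset.coe_insert, Set.insert_eq, fromEdgeSet_union, Finset.coe_erase, fromEdgeSet_sdiff,
    sup_comm, deleteEdges, edge]

def IsMinWeightConnected (E : Finset (Sym2 α)) (w : Sym2 α → ℝ) (F : Finset (Sym2 α)) :
    Prop :=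
  F ⊆ E ∧ (fromEdgeSet (F : Set (Sym2 α))).Connected ∧
    ∀ F' ⊆ E, (fromEdgeSet (F' : Set (Sym2 α))).Connected →
      edgeWeight w F ≤ edgeWeight w F'

lemma edgeWeight_insert_erase [DecidableEq α] (w : Sym2 α → ℝ) {F : Finset (Sym2 α)}
    {e f : Sym2 α} (he : e ∈ F) (hf : f ∉ F) :
    edgeWeight w (insert f (F.erase e)) = edgeWeight w F - w e + w f := by
  rw [edgeWeight, edgeWeight, Finset.sum_insert (fun h => hf (Finset.mem_of_mem_erase h)),
    Finset.sum_erase_eq_sub he]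
  ring

lemma IsSpanningTree.card_add_one [Fintype α] {F : Finset (Sym2 α)} (hF : IsSpanningTree F)
    (hdiag : ∀ e ∈ F, ¬ e.IsDiag) : F.card + 1 = Fintype.card α := by
  classical
  have hedges : (fromEdgeSet (F : Set (Sym2 α))).edgeFinset = F := by
    ext e
    simp only [mem_edgeFinset, edgeSet_fromEdgeSet, Set.mem_sdiff, Finset.mem_coe,
      Sym2.mem_diagSet]
    exact ⟨And.left, fun he => ⟨he, hdiag e he⟩⟩
  rw [← hedges]
  exact IsTree.card_edgeFinset ⟨hF.1, hF.2⟩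

lemma exists_isSpanningTree_subset {F : Finset (Sym2 α)}
    (hF : (fromEdgeSet (F : Set (Sym2 α))).Connected) : ∃ T ⊆ F, IsSpanningTree T := by
  obtain ⟨H, hle, hH⟩ := hF.exists_isTree_le
  have hsub : H.edgeSet ⊆ F := by
    intro e he
    have := edgeSet_mono hle he
    rw [edgeSet_fromEdgeSet] at this
    exact this.1
  refine ⟨(F.finite_toSet.subset hsub).toFinset, by simpa using hsub, ?_⟩
  rw [IsSpanningTree, Set.Finite.coe_toFinset, fromEdgeSet_edgeSet]
  exact ⟨hH.connected, hH.isAcyclic⟩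

lemma exists_isMinWeightConnected {E : Finset (Sym2 α)} (w : Sym2 α → ℝ)
    (hE : (fromEdgeSet (E : Set (Sym2 α))).Connected) : ∃ F, IsMinWeightConnected E w F := by
  classical
  obtain ⟨F, hF, hmin⟩ :=
    (E.powerset.filter fun F : Finset (Sym2 α) =>
      (fromEdgeSet (F : Set (Sym2 α))).Connected).exists_min_image (edgeWeight w)
      ⟨E, by simpa using hE⟩
  simp only [Finset.mem_filter, Finset.mem_powerset] at hF hmin
  exact ⟨F, hF.1, hF.2, fun F' hF' hc => hmin F' ⟨hF', hc⟩⟩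

lemma IsMST.isMinWeightConnected {E T : Finset (Sym2 α)} {w : Sym2 α → ℝ}
    (hw : ∀ e ∈ E, 0 ≤ w e) (hT : IsMST E w T) : IsMinWeightConnected E w T := by
  refine ⟨hT.1, hT.2.1.1, fun F hFE hF => ?_⟩
  obtain ⟨T', hT'F, hT'⟩ := exists_isSpanningTree_subset hF
  calc edgeWeight w T ≤ edgeWeight w T' := hT.2.2 T' (hT'F.trans hFE) hT'
    _ ≤ edgeWeight w F :=
      Finset.sum_le_sum_of_subset_of_nonneg hT'F fun e he _ => hw e (hFE he)

namespace IsMinWeightConnected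

variable {E E' F T : Finset (Sym2 α)} {w : Sym2 α → ℝ}

lemma isBridge (hw : ∀ e ∈ E, 0 < w e) (hF : IsMinWeightConnected E w F) {e : Sym2 α}
    (he : e ∈ F) : (fromEdgeSet (F : Set (Sym2 α))).IsBridge e := by
  classical
  induction e with | h a b => ?_
  by_contra hnb
  have hconn := hF.2.1.connected_delete_edge_of_not_isBridge hnb
  rw [← fromEdgeSet_coe_erase] at hconn
  have hle := hF.2.2 _ ((Finset.erase_subset _ _).trans hF.1) hconn
  rw [edgeWeight, edgeWeight, Finset.sum_erase_eq_sub he] at hle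
  linarith [hw _ (hF.1 he)]

lemma not_isDiag (hw : ∀ e ∈ E, 0 < w e) (hF : IsMinWeightConnected E w F) {e : Sym2 α}
    (he : e ∈ F) : ¬ e.IsDiag := by
  induction e with | h a b => ?_
  rintro (rfl : a = b)
  exact hF.isBridge hw he .rfl

lemma isAcyclic (hw : ∀ e ∈ E, 0 < w e) (hF : IsMinWeightConnected E w F) :
    (fromEdgeSet (F : Set (Sym2 α))).IsAcyclic :=
  isAcyclic_iff_forall_isBridge.2 fun e he => by
    rw [edgeSet_fromEdgeSet] at he
    exact hF.isBridge hw he.1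

lemma isMST (hw : ∀ e ∈ E, 0 < w e) (hF : IsMinWeightConnected E w F) : IsMST E w F :=
  ⟨hF.1, ⟨hF.2.1, hF.isAcyclic hw⟩, fun T hTE hT => hF.2.2 T hTE hT.1⟩

lemma exists_exchange [DecidableEq α] (hw : ∀ e ∈ E', 0 < w e)
    (hF : IsMinWeightConnected E' w F) (hT : IsMinWeightConnected E w T) (hE : E ⊆ E')
    {e : Sym2 α} (heF : e ∈ F) (heE : e ∈ E) (heT : e ∉ T) :
    ∃ f ∈ T, f ∉ F ∧ IsMinWeightConnected E' w (insert f (F.erase e)) := by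
  induction e with | h a b => ?_
  have hT_tree : (fromEdgeSet (T : Set (Sym2 α))).IsTree :=
    ⟨hT.2.1, hT.isAcyclic fun e he => hw e (hE he)⟩
  obtain ⟨c, d, hcd, hcut, hcut'⟩ := (hF.isBridge hw heF).exists_symmetric_exchange hT_tree
  have hfT : s(c, d) ∈ T := ((fromEdgeSet_adj _).1 hcd).1
  have hfF : s(c, d) ∉ F := fun hf =>
    hcut ((deleteEdges_adj ..).2 ⟨(fromEdgeSet_adj _).2 ⟨hf, hcd.ne⟩,
      fun h => heT (by rwa [← Set.mem_singleton_iff.1 h])⟩).reachable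
  have hF' := hF.2.1.deleteEdges_sup_edge hcut
  have hT' := hT.2.1.deleteEdges_sup_edge hcut'
  rw [← fromEdgeSet_coe_insert_erase] at hF' hT'
  have hwT := hT.2.2 _ (Finset.insert_subset heE ((Finset.erase_subset _ _).trans hT.1)) hT'
  rw [edgeWeight_insert_erase w hfT heT] at hwT
  refine ⟨s(c, d), hfT, hfF, Finset.insert_subset (hE (hT.1 hfT))
    ((Finset.erase_subset _ _).trans hF.1), hF', fun F'' hF''E hF'' => ?_⟩
  rw [edgeWeight_insert_erase w heF hfF]
  linarith [hF.2.2 F'' hF''E hF'']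

end IsMinWeightConnected

lemma exists_isMinWeightConnected_subset_union [DecidableEq α] {E Eδ T F : Finset (Sym2 α)}
    {w : Sym2 α → ℝ} (hw : ∀ e ∈ E ∪ Eδ, 0 < w e) (hT : IsMinWeightConnected E w T)
    (hF : IsMinWeightConnected (E ∪ Eδ) w F) :
    ∃ F', IsMinWeightConnected (E ∪ Eδ) w F' ∧ F' ⊆ T ∪ Eδ := by
  induction hn : (F \ (T ∪ Eδ)).card using Nat.strong_induction_on generalizing F with
  | _ n ih =>
    by_cases hsub : F ⊆ T ∪ Eδ
    · exact ⟨F, hF, hsub⟩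
    obtain ⟨e, heF, he⟩ := Finset.not_subset.1 hsub
    have heE : e ∈ E :=
      (Finset.mem_union.1 (hF.1 heF)).resolve_right fun h => he (Finset.mem_union_right _ h)
    obtain ⟨f, hfT, hfF, hF'⟩ :=
      hF.exists_exchange hw hT Finset.subset_union_left heF heE (fun h => he (by simp [h]))
    refine ih _ ?_ hF' rfl
    have hsub' : insert f (F.erase e) \ (T ∪ Eδ) ⊆ (F \ (T ∪ Eδ)).erase e := by
      intro g
      grind
    exact hn ▸ (Finset.card_le_card hsub').trans_lt
      (Finset.card_erase_lt_of_mem (Finset.mem_sdiff.2 ⟨heF, he⟩))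

end

theorem mst_add_edges_exists_close_mst_general (E Eδ T : Finset (Sym2 V)) (w : Sym2 V → ℝ) (δ : ℕ)
    (hw : ∀ e ∈ E ∪ Eδ, 0 < w e)
    (hconn : (SimpleGraph.fromEdgeSet (E : Set (Sym2 V))).Connected)
    (hT : IsMST E w T)
    (hdisj : Disjoint E Eδ) (hδ : Eδ.card = δ) :
    ∃ Tstar : Finset (Sym2 V), Tstar ⊆ T ∪ Eδ ∧ ((T ∪ Eδ) \ Tstar).card = δ ∧
      IsMST (E ∪ Eδ) w Tstar := by
  have hwE : ∀ e ∈ E, 0 < w e := fun e he => hw e (Finset.mem_union_left _ he)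
  have hT' := hT.isMinWeightConnected fun e he => (hwE e he).le
  obtain ⟨F, hF⟩ := exists_isMinWeightConnected w
    (hconn.mono (fromEdgeSet_mono (Finset.coe_subset.2 Finset.subset_union_left)))
  obtain ⟨Tstar, hTstar, hsub⟩ := exists_isMinWeightConnected_subset_union hw hT' hF
  refine ⟨Tstar, hsub, ?_, hTstar.isMST hw⟩
  have hcard := (hTstar.isMST hw).2.1.card_add_one fun e => hTstar.not_isDiag hw
  have hcardT := hT.2.1.card_add_one fun e => hT'.not_isDiag hwE
  rw [Finset.card_sdiff_of_subset hsub, Finset.card_union_of_disjoint (hdisj.mono_left hT.1)]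
  omega

/-- Let `T` be a minimum spanning tree of a finite connected
edge-weighted graph `G = (V,E,w)` with strictly positive weights, and let
`G_δ = (V, E ∪ E_δ, w)` be obtained from `G` by adding a set `E_δ` of `δ` new
edges of strictly positive weight, `E ∩ E_δ = ∅`. Then there is a minimum
spanning tree `T*` of `G_δ` with `T* ⊆ T ∪ E_δ`, i.e., one that is obtained by
removing `δ` edges from `T ∪ E_δ`. -/
theorem mst_add_edges_exists_close_mst (E Eδ T : Finset (Sym2 V)) (w : Sym2 V → ℝ) (δ : ℕ)
    (hloop : ∀ e ∈ E ∪ Eδ, ¬ e.IsDiag)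
    (hw : ∀ e ∈ E ∪ Eδ, 0 < w e)
    (hconn : (SimpleGraph.fromEdgeSet (E : Set (Sym2 V))).Connected)
    (hT : IsMST E w T)
    (hdisj : Disjoint E Eδ) (hδ : Eδ.card = δ) :
    ∃ Tstar : Finset (Sym2 V), Tstar ⊆ T ∪ Eδ ∧ ((T ∪ Eδ) \ Tstar).card = δ ∧
      IsMST (E ∪ Eδ) w Tstar :=
  mst_add_edges_exists_close_mst_general E Eδ T w δ hw hconn hT hdisj hδ
end

section
/- Let T be a minimum spanning tree of a finite connected edge-weighted graph G = (V,E,w) with strictly positive weights, let E_δ be a set of δ new edges with strictly positive weights and E ∩ E_δ = ∅, and let G_δ = (V, E ∪ E_δ, w') where w' extends w. Define edges e_1, e_2, …, e_δ greedily: e_k is an edge of maximum weight in (T ∪ E_δ) \ {e_1,…,e_{k−1}} whose removal leaves the graph (V, (T ∪ E_δ) \ {e_1,…,e_k}) connected; set E_i := {e_1,…,e_i} and x^i := (T ∪ E_δ) \ E_i. Then for every i ∈ {1,…,δ}, the graph (V, x^i) is connected and x^i has minimum total weight among all edge sets F ⊆ E ∪ E_δ such that (V,F) is connected and the symmetric difference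 of F and T ∪ E_δ has size exactly i. -/
/-! Write `M = T ∪ E_δ`. Edge sets whose removal leaves `(V, M)` connected are the independent
sets of the cographic matroid of `M`, so they satisfy the augmentation property and the greedy
sets `E_i` are heaviest among them: `x^i` is the lightest connected subset of `M` at distance
`i` from `M`. A connected `F ⊆ E ∪ E_δ` not contained in `M` has an edge `a ∈ E \ T`. If `F - a`
is still connected, drop `a`. Otherwise `a` is a bridge of `F`, the path of `T` between the ends
of `a` crosses the cut of `F - a` at some `t ∉ F`, and since `T - t + a` is a spanning tree,
minimality of `T` gives `w t ≤ w a`, so `F - a + t` is no heavier than `F`. Both moves bring `F`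
closer to `M`, and the weight of `x^i` decreases with `i`. -/

open SimpleGraph

variable {V : Type*} [Fintype V] [DecidableEq V]

local notation "𝒢" F:max => fromEdgeSet (SetLike.coe F)

namespace SimpleGraph

variable {V : Type*} {G G' : SimpleGraph V}

theorem Walk.reachable_deleteEdges_or {u v a b : V} (p : G.Walk a b) :
    (G.deleteEdges {s(u, v)}).Reachable a b ∨
      (G.deleteEdges {s(u, v)}).Reachable a u ∨ (G.deleteEdges {s(u, v)}).Reachable a v := by
  induction p with
  | nil => exact .inl .rfl
  | @cons a c b hac q ih =>
    by_cases he : s(a, c) = s(u, v)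
    · rcases Sym2.eq_iff.mp he with ⟨rfl, -⟩ | ⟨rfl, -⟩
      exacts [.inr (.inl .rfl), .inr (.inr .rfl)]
    · have hH : (G.deleteEdges {s(u, v)}).Adj a c := by simp [hac, he]
      exact ih.imp hH.reachable.trans (Or.imp hH.reachable.trans hH.reachable.trans)

theorem Reachable.mono_of_deleteEdges_le {u v a b : V} (hab : G.Reachable a b)
    (hle : G.deleteEdges {s(u, v)} ≤ G') (huv : G'.Reachable u v) : G'.Reachable a b := by
  have hside : ∀ {z z' : V}, G.Reachable z z' → G'.Reachable z z' ∨ G'.Reachable z u := by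
    rintro z z' ⟨p⟩
    rcases p.reachable_deleteEdges_or (u := u) (v := v) with h | h | h
    exacts [.inl (h.mono hle), .inr (h.mono hle), .inr ((h.mono hle).trans huv.symm)]
  rcases hside hab with h | ha
  · exact h
  rcases hside hab.symm with h | hb
  exacts [h.symm, ha.trans hb.symm]

theorem Connected.of_deleteEdges_le {u v : V} (hG : G.Connected)
    (hle : G.deleteEdges {s(u, v)} ≤ G') (huv : G'.Reachable u v) : G'.Connected :=
  (connected_iff _).2
    ⟨fun _ _ ↦ (hG.preconnected _ _).mono_of_deleteEdges_le hle huv, hG.nonempty⟩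

theorem Connected.mem_edgeSet_of_not_connected_deleteEdges {H : SimpleGraph V}
    (hH : H.Connected) (hle : H ≤ G) {d : Sym2 V} (hd : ¬(G.deleteEdges {d}).Connected) :
    d ∈ H.edgeSet := by
  by_contra hdH
  exact hd <| hH.mono fun x y hxy ↦ by
    simpa [hle hxy] using fun h : s(x, y) = d ↦ hdH (h ▸ H.mem_edgeSet.2 hxy)

/-- Augmentation in the cographic matroid. A spanning tree `B` of `G \ D` extending `S \ D`, for a
spanning tree `S` of `G \ D'`, must contain every `d ∈ D' \ D` if the claim fails; counting edges
of `B` and `S` then gives `#(D' \ D) ≤ #(D \ D')`. -/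
theorem exists_connected_deleteEdges_deleteEdges [Finite V] [DecidableEq V]
    {D D' : Finset (Sym2 V)} (hD : (G.deleteEdges D).Connected)
    (hD' : (G.deleteEdges D').Connected) (hlt : D.card < D'.card) :
    ∃ d ∈ D' \ D, ((G.deleteEdges D).deleteEdges {d}).Connected := by
  obtain ⟨S, hSle, hS⟩ := hD'.exists_isTree_le
  obtain ⟨B, hSB, hBle, hB⟩ := hD.exists_isTree_le_of_le_of_isAcyclic
    (H := S.deleteEdges D) (deleteEdges_mono (hSle.trans (deleteEdges_le _)))
    (hS.isAcyclic.anti (deleteEdges_le _))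
  by_contra! hno
  have hSD' : Disjoint S.edgeSet D' :=
    Set.disjoint_left.2 fun e he heD' ↦ by simpa [heD'] using edgeSet_mono hSle he
  have hS_sub : S.edgeSet ⊆ (S.deleteEdges D).edgeSet ∪ ↑(D \ D') := fun e he ↦ by
    by_cases heD : e ∈ D
    · exact .inr (by simp [heD, Set.disjoint_left.1 hSD' he])
    · exact .inl (by simp [he, heD])
  have hB_sup : (S.deleteEdges D).edgeSet ∪ ↑(D' \ D) ⊆ B.edgeSet :=
    Set.union_subset (edgeSet_mono hSB) fun d hd ↦
      hB.connected.mem_edgeSet_of_not_connected_deleteEdges hBle (hno d hd)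
  have hdisj : Disjoint (S.deleteEdges D).edgeSet ↑(D' \ D) :=
    Set.disjoint_left.2 fun e he heD ↦ by
      simp only [edgeSet_deleteEdges, Set.mem_sdiff, Finset.coe_sdiff] at he heD
      exact Set.disjoint_left.1 hSD' he.1 heD.1
  have hcardS := (isTree_iff_connected_and_card.1 hS).2
  have hcardB := (isTree_iff_connected_and_card.1 hB).2
  simp only [Nat.card_coe_set_eq] at hcardS hcardB
  have h1 := (Set.ncard_le_ncard hS_sub).trans (Set.ncard_union_le _ _)
  have h2 := Set.ncard_le_ncard hB_sup
  rw [Set.ncard_union_eq hdisj] at h2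
  simp only [Set.ncard_coe_finset] at h1 h2
  have h3 := Finset.card_sdiff_add_card_inter D' D
  have h4 := Finset.card_sdiff_add_card_inter D D'
  rw [Finset.inter_comm] at h4
  omega

end SimpleGraph

section SymmDiff

variable {α : Type*} [DecidableEq α] {F M : Finset α} {a : α}

theorem Finset.symmDiff_erase_left_of_notMem (ha : a ∉ M) :
    symmDiff (F.erase a) M = (symmDiff F M).erase a := by
  ext x
  by_cases hx : x = a <;> simp [Finset.mem_symmDiff, hx, ha]

theorem Finset.symmDiff_insert_left_of_mem (ha : a ∈ M) :
    symmDiff (insert a F) M = (symmDiff F M).erase a := by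
  ext x
  by_cases hx : x = a <;> simp [Finset.mem_symmDiff, hx, ha]

end SymmDiff

section PrefixImage

variable {α : Type*} [DecidableEq α] {δ : ℕ}

def prefixImage (e : Fin δ → α) (k : ℕ) : Finset α :=
  (Finset.univ.filter fun j : Fin δ => (j : ℕ) < k).image e

theorem prefixImage_zero (e : Fin δ → α) : prefixImage e 0 = ∅ := by
  simp [prefixImage]

theorem prefixImage_succ (e : Fin δ → α) (k : Fin δ) :
    prefixImage e (k + 1) = insert (e k) (prefixImage e k) := by
  ext a
  simp only [prefixImage, Finset.mem_insert, Finset.mem_image, Finset.mem_filter]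
  grind

theorem prefixImage_mono (e : Fin δ → α) : Monotone (prefixImage e) := fun _ _ hij ↦
  Finset.image_subset_image (Finset.monotone_filter_right _ fun _ _ hl ↦ hl.trans_le hij)

theorem prefixImage_subset {e : Fin δ → α} {M : Finset α} (he : ∀ k : Fin δ, e k ∈ M)
    (j : ℕ) : prefixImage e j ⊆ M := by
  simp only [prefixImage, Finset.image_subset_iff]
  exact fun k _ ↦ he k

theorem card_prefixImage {e : Fin δ → α} (he : ∀ k : Fin δ, e k ∉ prefixImage e k) {j : ℕ}
    (hj : j ≤ δ) : (prefixImage e j).card = j := by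
  induction j with
  | zero => simp [prefixImage_zero]
  | succ j ih =>
    rw [prefixImage_succ e ⟨j, hj⟩, Finset.card_insert_of_notMem (he _), ih (by omega)]

end PrefixImage

section EdgeSets

variable {V : Type*}

theorem fromEdgeSet_coe_sdiff [DecidableEq V] (X D : Finset (Sym2 V)) :
    𝒢 (X \ D) = (𝒢 X).deleteEdges (D : Set (Sym2 V)) := by
  rw [deleteEdges_fromEdgeSet, Finset.coe_sdiff]

theorem fromEdgeSet_coe_erase_s10 [DecidableEq V] (X : Finset (Sym2 V)) (e : Sym2 V) :
    𝒢 (X.erase e) = (𝒢 X).deleteEdges {e} := by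
  rw [deleteEdges_fromEdgeSet, Finset.coe_erase]

theorem edgeWeight_insert [DecidableEq V] (w : Sym2 V → ℝ) {F : Finset (Sym2 V)} {e : Sym2 V}
    (he : e ∉ F) : edgeWeight w (insert e F) = w e + edgeWeight w F :=
  Finset.sum_insert he

theorem edgeWeight_erase_add [DecidableEq V] (w : Sym2 V → ℝ) {F : Finset (Sym2 V)}
    {e : Sym2 V} (he : e ∈ F) : edgeWeight w (F.erase e) + w e = edgeWeight w F :=
  Finset.sum_erase_add _ _ he

theorem natCard_edgeSet_fromEdgeSet_coe {F : Finset (Sym2 V)} (hF : ∀ e ∈ F, ¬e.IsDiag) :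
    Nat.card (𝒢 F).edgeSet = F.card := by
  rw [edgeSet_fromEdgeSet,
    sdiff_eq_left.2 (Set.disjoint_left.2 fun e he hd ↦ hF e he (Sym2.mem_diagSet.1 hd)),
    Nat.card_coe_set_eq, Set.ncard_coe_finset]

theorem IsSpanningTree.of_connected_of_card_eq [Finite V] {T T' : Finset (Sym2 V)}
    (hT : IsSpanningTree T) (hTl : ∀ e ∈ T, ¬e.IsDiag) (hT'l : ∀ e ∈ T', ¬e.IsDiag)
    (hc : (𝒢 T').Connected) (hcard : T'.card = T.card) : IsSpanningTree T' := by
  have hT' := isTree_iff_connected_and_card.2 ⟨hc, by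
    rw [natCard_edgeSet_fromEdgeSet_coe hT'l, hcard, ← natCard_edgeSet_fromEdgeSet_coe hTl]
    exact (isTree_iff_connected_and_card.1 ⟨hT.1, hT.2⟩).2⟩
  exact ⟨hT'.connected, hT'.isAcyclic⟩

theorem IsSpanningTree.insert_erase [Finite V] [DecidableEq V] {T : Finset (Sym2 V)}
    (hT : IsSpanningTree T) (hTl : ∀ e ∈ T, ¬e.IsDiag) {u v x y : V} (huv : u ≠ v)
    (huvT : s(u, v) ∉ T) {p : (𝒢 T).Walk u v} (hp : p.IsTrail) (hxy : s(x, y) ∈ p.edges) :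
    IsSpanningTree (insert s(u, v) (T.erase s(x, y))) := by
  have hxyT : s(x, y) ∈ T := by simpa using (p.edges_subset_edgeSet hxy).1
  set T' := insert s(u, v) (T.erase s(x, y))
  have hle : (𝒢 T).deleteEdges {s(x, y)} ≤ 𝒢 T' := by
    rw [← fromEdgeSet_coe_erase_s10]; exact fromEdgeSet_mono (by simp [T'])
  have hu : ∀ z, ((𝒢 T).deleteEdges {s(x, y)}).Reachable u z ∨
      ((𝒢 T).deleteEdges {s(x, y)}).Reachable v z → (𝒢 T').Reachable u z := by
    have huv' : (𝒢 T').Adj u v := by simp [T', huv]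
    rintro z (h | h)
    exacts [h.mono hle, huv'.reachable.trans (h.mono hle)]
  -- both ends of an edge on a trail from `u` to `v` stay linked to `u` or `v` without that edge
  have hx : (𝒢 T').Reachable u x := hu x <| by
    by_contra! h
    rw [Sym2.eq_swap] at h
    exact hp.not_mem_edges_of_not_reachable h.1 h.2 (Sym2.eq_swap ▸ hxy)
  have hy : (𝒢 T').Reachable u y := hu y <| by
    by_contra! h
    exact hp.not_mem_edges_of_not_reachable h.1 h.2 hxy
  refine IsSpanningTree.of_connected_of_card_eq hT hTl ?_
    (hT.1.of_deleteEdges_le hle (hx.symm.trans hy)) ?_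
  · simp only [T', Finset.mem_insert, Finset.mem_erase]
    rintro e (rfl | ⟨-, he⟩)
    exacts [by simpa using huv, hTl e he]
  · rw [Finset.card_insert_of_notMem (by simp [huvT]), Finset.card_erase_add_one hxyT]

theorem IsMST.exists_exchange [Finite V] [DecidableEq V] {E T F : Finset (Sym2 V)}
    {w : Sym2 V → ℝ} (hT : IsMST E w T) (hE : ∀ e ∈ E, ¬e.IsDiag) (hF : (𝒢 F).Connected)
    {a : Sym2 V} (haF : a ∈ F) (haE : a ∈ E) (haT : a ∉ T)
    (hbridge : ¬(𝒢 (F.erase a)).Connected) :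
    ∃ t ∈ T, t ∉ F ∧ w t ≤ w a ∧ (𝒢 (insert t (F.erase a))).Connected := by
  obtain ⟨hTE, hTtree, hTmin⟩ := hT
  induction a using Sym2.ind with | _ u v => ?_
  have huv : u ≠ v := fun h ↦ hE _ haE (by simp [h])
  set H := 𝒢 (F.erase s(u, v))
  have hH : (𝒢 F).deleteEdges {s(u, v)} = H := (fromEdgeSet_coe_erase_s10 _ _).symm
  have hnr : ¬H.Reachable u v := fun h ↦ hbridge (hF.of_deleteEdges_le hH.le h)
  obtain ⟨p, hp⟩ := hTtree.1.exists_isPath u v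
  obtain ⟨⟨⟨x, y⟩, hxy⟩, hd, hx, hy⟩ := p.exists_boundary_dart {z | H.Reachable u z} .rfl hnr
  replace hx : H.Reachable u x := hx
  replace hy : ¬H.Reachable u y := hy
  have hxyp : s(x, y) ∈ p.edges := List.mem_map_of_mem hd
  have hxyT : s(x, y) ∈ T := by simpa using (p.edges_subset_edgeSet hxyp).1
  have htF : s(x, y) ∉ F := fun h ↦ hy <| hx.trans <| Adj.reachable <| (fromEdgeSet_adj _).2
    ⟨Finset.mem_erase.2 ⟨fun h' ↦ haT (h' ▸ hxyT), h⟩, ((fromEdgeSet_adj _).1 hxy).2⟩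
  have hyv : H.Reachable y v := by
    obtain ⟨q⟩ := hF.preconnected y u
    rcases q.reachable_deleteEdges_or (u := u) (v := v) with h | h | h
    exacts [absurd (hH ▸ h).symm hy, absurd (hH ▸ h).symm hy, hH ▸ h]
  refine ⟨s(x, y), hxyT, htF, ?_, hF.of_deleteEdges_le (u := u) (v := v) ?_ ?_⟩
  · have hT' := hTtree.insert_erase (fun e he ↦ hE e (hTE he)) huv haT hp.isTrail hxyp
    have := hTmin _ (Finset.insert_subset haE ((Finset.erase_subset _ _).trans hTE)) hT'
    rw [edgeWeight_insert w (by simp [haT]), ← edgeWeight_erase_add w hxyT] at this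
    linarith
  · rw [hH]; exact fromEdgeSet_mono (by simp)
  · have hle : H ≤ 𝒢 (insert s(x, y) (F.erase s(u, v))) := fromEdgeSet_mono (by simp)
    have hxy' : (𝒢 (insert s(x, y) (F.erase s(u, v)))).Adj x y := by
      simpa using ((fromEdgeSet_adj _).1 hxy).2
    exact (hx.mono hle).trans (hxy'.reachable.trans (hyv.mono hle))

section Greedy

variable [DecidableEq V] [Finite V] {M : Finset (Sym2 V)} {w : Sym2 V → ℝ} {δ : ℕ}
  {e : Fin δ → Sym2 V}

theorem edgeWeight_le_edgeWeight_prefixImage (hmem : ∀ k : Fin δ, e k ∈ M \ prefixImage e k)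
    (hconn : ∀ j ≤ δ, (𝒢 (M \ prefixImage e j)).Connected)
    (hmax : ∀ k : Fin δ, ∀ g ∈ M \ prefixImage e k,
      (𝒢 ((M \ prefixImage e k).erase g)).Connected → w g ≤ w (e k))
    {D : Finset (Sym2 V)} (hDM : D ⊆ M) (hDc : (𝒢 (M \ D)).Connected) (hD : D.card ≤ δ) :
    edgeWeight w D ≤ edgeWeight w (prefixImage e D.card) := by
  induction hj : D.card generalizing D with
  | zero => simp [Finset.card_eq_zero.1 hj, prefixImage_zero, edgeWeight]
  | succ j ih =>
    set k : Fin δ := ⟨j, by omega⟩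
    have hcard : (prefixImage e j).card = j :=
      card_prefixImage (fun k ↦ (Finset.mem_sdiff.1 (hmem k)).2) (by omega)
    obtain ⟨d, hd, hdc⟩ := exists_connected_deleteEdges_deleteEdges (G := 𝒢 M)
      (by rw [← fromEdgeSet_coe_sdiff]; exact hconn j (by omega))
      (by rw [← fromEdgeSet_coe_sdiff]; exact hDc) (by omega)
    rw [Finset.mem_sdiff] at hd
    have hwd : w d ≤ w (e k) := hmax k d (Finset.mem_sdiff.2 ⟨hDM hd.1, hd.2⟩) <| by
      rwa [fromEdgeSet_coe_erase_s10, fromEdgeSet_coe_sdiff]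
    have hrec := ih ((Finset.erase_subset _ _).trans hDM)
      (hDc.mono (fromEdgeSet_mono (by gcongr; exact Finset.erase_subset d D)))
      (by rw [Finset.card_erase_of_mem hd.1]; omega)
      (by rw [Finset.card_erase_of_mem hd.1, hj]; rfl)
    rw [prefixImage_succ e k, edgeWeight_insert w (Finset.mem_sdiff.1 (hmem k)).2,
      ← edgeWeight_erase_add w hd.1]
    linarith

theorem edgeWeight_sdiff_prefixImage_le (hmem : ∀ k : Fin δ, e k ∈ M \ prefixImage e k)
    (hconn : ∀ j ≤ δ, (𝒢 (M \ prefixImage e j)).Connected)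
    (hmax : ∀ k : Fin δ, ∀ g ∈ M \ prefixImage e k,
      (𝒢 ((M \ prefixImage e k).erase g)).Connected → w g ≤ w (e k))
    {F : Finset (Sym2 V)} (hFM : F ⊆ M) (hFc : (𝒢 F).Connected) (hF : (M \ F).card ≤ δ) :
    edgeWeight w (M \ prefixImage e (M \ F).card) ≤ edgeWeight w F := by
  have hgreedy := edgeWeight_le_edgeWeight_prefixImage hmem hconn hmax Finset.sdiff_subset
    (by rwa [Finset.sdiff_sdiff_eq_self hFM]) hF
  have hP := prefixImage_subset (fun k ↦ (Finset.mem_sdiff.1 (hmem k)).1) (M \ F).card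
  have h1 : edgeWeight w (M \ prefixImage e _) + edgeWeight w (prefixImage e _) =
      edgeWeight w M := Finset.sum_sdiff hP
  have h2 : edgeWeight w (M \ F) + edgeWeight w F = edgeWeight w M := Finset.sum_sdiff hFM
  linarith

end Greedy

theorem edgeWeight_sdiff_prefixImage_antitone [DecidableEq V] {M : Finset (Sym2 V)}
    {w : Sym2 V → ℝ} {δ : ℕ} (e : Fin δ → Sym2 V) (hw : ∀ g ∈ M, 0 ≤ w g) :
    Antitone fun j ↦ edgeWeight w (M \ prefixImage e j) := fun _ _ hij ↦
  Finset.sum_le_sum_of_subset_of_nonneg (Finset.sdiff_subset_sdiff le_rfl (prefixImage_mono e hij))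
    fun g hg _ ↦ hw g (Finset.mem_sdiff.1 hg).1

theorem IsMST.le_edgeWeight_of_connected [Finite V] [DecidableEq V]
    {E T M : Finset (Sym2 V)} {w : Sym2 V → ℝ} (hT : IsMST E w T) (hE : ∀ e ∈ E, ¬e.IsDiag)
    (hw : ∀ e ∈ E, 0 ≤ w e) (hTM : T ⊆ M) {δ : ℕ} {φ : ℕ → ℝ} (hφ : Antitone φ)
    (hbase : ∀ F ⊆ M, (𝒢 F).Connected → (M \ F).card ≤ δ → φ (M \ F).card ≤ edgeWeight w F)
    {F : Finset (Sym2 V)} (hF : F ⊆ E ∪ M) (hFc : (𝒢 F).Connected)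
    (hδ : (symmDiff F M).card ≤ δ) : φ (symmDiff F M).card ≤ edgeWeight w F := by
  induction hn : (F \ M).card generalizing F with
  | zero =>
    have hFM : F ⊆ M := Finset.sdiff_eq_empty_iff_subset.1 (Finset.card_eq_zero.1 hn)
    rw [symmDiff_of_le hFM] at hδ ⊢
    exact hbase F hFM hFc hδ
  | succ n ih =>
    obtain ⟨a, ha⟩ : (F \ M).Nonempty := Finset.card_pos.1 (by omega)
    obtain ⟨haF, haM⟩ := Finset.mem_sdiff.1 ha
    have haE : a ∈ E := (Finset.mem_union.1 (hF haF)).resolve_right haM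
    have haΔ : a ∈ symmDiff F M := Finset.mem_symmDiff.2 (.inl ⟨haF, haM⟩)
    have hwa := edgeWeight_erase_add w haF
    have hΔa := Finset.card_erase_of_mem haΔ
    have hFa : (F.erase a \ M).card = n := by
      rw [Finset.erase_sdiff_comm, Finset.card_erase_of_mem ha, hn, Nat.add_sub_cancel]
    by_cases hc : (𝒢 (F.erase a)).Connected
    · have h := ih ((Finset.erase_subset _ _).trans hF) hc
        (by rw [Finset.symmDiff_erase_left_of_notMem haM]; omega) hFa
      rw [Finset.symmDiff_erase_left_of_notMem haM, hΔa] at h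
      linarith [hw a haE, hφ (Nat.sub_le (symmDiff F M).card 1)]
    · obtain ⟨t, htT, htF, hwt, hc'⟩ :=
        hT.exists_exchange hE hFc haF haE (fun h ↦ haM (hTM h)) hc
      have htΔ : t ∈ (symmDiff F M).erase a := Finset.mem_erase.2
        ⟨fun h ↦ haM (h ▸ hTM htT), Finset.mem_symmDiff.2 (.inr ⟨hTM htT, htF⟩)⟩
      have hΔ : symmDiff (insert t (F.erase a)) M = ((symmDiff F M).erase a).erase t := by
        rw [Finset.symmDiff_insert_left_of_mem (hTM htT),
          Finset.symmDiff_erase_left_of_notMem haM]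
      have hΔt := Finset.card_erase_of_mem htΔ
      have h := ih (Finset.insert_subset (Finset.mem_union_left _ (hT.1 htT))
          ((Finset.erase_subset _ _).trans hF)) hc' (by rw [hΔ]; omega)
        (by rw [Finset.insert_sdiff_of_mem _ (hTM htT), hFa])
      rw [hΔ, hΔt, hΔa, edgeWeight_insert w (fun h ↦ htF (Finset.mem_of_mem_erase h))] at h
      linarith [hφ (show (symmDiff F M).card - 1 - 1 ≤ (symmDiff F M).card by omega)]

end EdgeSets

theorem mst_add_edges_greedy_removal_optimal_general (E Eδ T : Finset (Sym2 V)) (w : Sym2 V → ℝ)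
    (δ : ℕ)
    (hloop : ∀ e ∈ E ∪ Eδ, ¬ e.IsDiag)
    (hw : ∀ e ∈ E ∪ Eδ, 0 < w e)
    (hT : IsMST E w T)
    (e : Fin δ → Sym2 V)
    -- `Ei k = {e_1, …, e_k}`
    (Ei : ℕ → Finset (Sym2 V))
    (hEi : ∀ k : ℕ, Ei k = (Finset.univ.filter fun j : Fin δ => (j : ℕ) < k).image e)
    -- `e_k` lies in `(T ∪ E_δ) \ {e_1,…,e_{k−1}}` ...
    (hmem : ∀ k : Fin δ, e k ∈ (T ∪ Eδ) \ Ei k)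
    -- ... its removal leaves the graph connected ...
    (hconn' : ∀ k : Fin δ,
      (SimpleGraph.fromEdgeSet (((T ∪ Eδ) \ Ei ((k : ℕ) + 1)) : Set (Sym2 V))).Connected)
    -- ... and it has maximum weight among such edges.
    (hmax : ∀ k : Fin δ, ∀ g ∈ (T ∪ Eδ) \ Ei k,
      (SimpleGraph.fromEdgeSet ((((T ∪ Eδ) \ Ei k) \ {g}) : Set (Sym2 V))).Connected →
        w g ≤ w (e k)) :
    ∀ i : ℕ, 1 ≤ i → i ≤ δ →
      (SimpleGraph.fromEdgeSet (((T ∪ Eδ) \ Ei i) : Set (Sym2 V))).Connected ∧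
      ∀ F : Finset (Sym2 V), F ⊆ E ∪ Eδ →
        (SimpleGraph.fromEdgeSet (F : Set (Sym2 V))).Connected →
        (symmDiff F (T ∪ Eδ)).card = i →
        edgeWeight w ((T ∪ Eδ) \ Ei i) ≤ edgeWeight w F := by
  obtain rfl : Ei = prefixImage e := funext hEi
  have hME : T ∪ Eδ ⊆ E ∪ Eδ := Finset.union_subset_union hT.1 le_rfl
  have hconn : ∀ j ≤ δ, (𝒢 ((T ∪ Eδ) \ prefixImage e j)).Connected := by
    rintro (_ | j) hj
    · rw [prefixImage_zero, Finset.sdiff_empty]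
      exact hT.2.1.1.mono (fromEdgeSet_mono (by simp))
    · simpa using hconn' ⟨j, hj⟩
  have hmax' : ∀ k : Fin δ, ∀ g ∈ (T ∪ Eδ) \ prefixImage e k,
      (𝒢 (((T ∪ Eδ) \ prefixImage e k).erase g)).Connected → w g ≤ w (e k) :=
    fun k g hg hc ↦ hmax k g hg (by simpa [← Finset.sdiff_singleton_eq_erase] using hc)
  refine fun i _ hi ↦ ⟨by simpa using hconn i hi, fun F hF hFc hFi ↦ hFi ▸ ?_⟩
  refine hT.le_edgeWeight_of_connected (fun g hg ↦ hloop g (by simp [hg]))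
    (fun g hg ↦ (hw g (by simp [hg])).le) Finset.subset_union_left
    (edgeWeight_sdiff_prefixImage_antitone e fun g hg ↦ (hw g (hME hg)).le)
    (fun F' hF' hF'c hδ' ↦ edgeWeight_sdiff_prefixImage_le hmem hconn hmax' hF' hF'c hδ')
    (hF.trans (by simp [Finset.union_subset_union_right])) hFc (hFi ▸ hi)

/-- Let `T` be a minimum spanning tree of the finite
connected graph `G = (V,E,w)` with strictly positive weights, `E_δ` a set of
`δ` new edges (`E ∩ E_δ = ∅`, strictly positive weights), and let edges
`e_1, …, e_δ` be chosen greedily: `e_k` is an edge of maximum weight in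
`(T ∪ E_δ) \ {e_1,…,e_{k−1}}` whose removal leaves
`(V, (T ∪ E_δ) \ {e_1,…,e_k})` connected. With `E_i := {e_1,…,e_i}` and
`x^i := (T ∪ E_δ) \ E_i`, for every `i ∈ {1,…,δ}` the graph `(V, x^i)` is
connected and `x^i` has minimum total weight among all `F ⊆ E ∪ E_δ` with
`(V,F)` connected and `|F ∆ (T ∪ E_δ)| = i`. -/
theorem mst_add_edges_greedy_removal_optimal (E Eδ T : Finset (Sym2 V)) (w : Sym2 V → ℝ)
    (δ : ℕ)
    (hloop : ∀ e ∈ E ∪ Eδ, ¬ e.IsDiag)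
    (hw : ∀ e ∈ E ∪ Eδ, 0 < w e)
    (hconn : (SimpleGraph.fromEdgeSet (E : Set (Sym2 V))).Connected)
    (hT : IsMST E w T)
    (hdisj : Disjoint E Eδ) (hδ : Eδ.card = δ)
    (e : Fin δ → Sym2 V)
    -- `Ei k = {e_1, …, e_k}`
    (Ei : ℕ → Finset (Sym2 V))
    (hEi : ∀ k : ℕ, Ei k = (Finset.univ.filter fun j : Fin δ => (j : ℕ) < k).image e)
    -- `e_k` lies in `(T ∪ E_δ) \ {e_1,…,e_{k−1}}` ...
    (hmem : ∀ k : Fin δ, e k ∈ (T ∪ Eδ) \ Ei k)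
    -- ... its removal leaves the graph connected ...
    (hconn' : ∀ k : Fin δ,
      (SimpleGraph.fromEdgeSet (((T ∪ Eδ) \ Ei ((k : ℕ) + 1)) : Set (Sym2 V))).Connected)
    -- ... and it has maximum weight among such edges.
    (hmax : ∀ k : Fin δ, ∀ g ∈ (T ∪ Eδ) \ Ei k,
      (SimpleGraph.fromEdgeSet ((((T ∪ Eδ) \ Ei k) \ {g}) : Set (Sym2 V))).Connected →
        w g ≤ w (e k)) :
    ∀ i : ℕ, 1 ≤ i → i ≤ δ →
      (SimpleGraph.fromEdgeSet (((T ∪ Eδ) \ Ei i) : Set (Sym2 V))).Connected ∧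
      ∀ F : Finset (Sym2 V), F ⊆ E ∪ Eδ →
        (SimpleGraph.fromEdgeSet (F : Set (Sym2 V))).Connected →
        (symmDiff F (T ∪ Eδ)).card = i →
        edgeWeight w ((T ∪ Eδ) \ Ei i) ≤ edgeWeight w F :=
  mst_add_edges_greedy_removal_optimal_general E Eδ T w δ hloop hw hT e Ei hEi hmem hconn' hmax
end

section
/- Let n ≥ 1, let 1 ≤ B ≤ n, let w_i = 2^{n−i} for i ∈ {1,…,n}, let C = n·2^{n−1} + 1, and define f : {0,1}^n → ℝ by f(x) = Σ_{i=1}^n 2^{n−i} x_i − C·max{Σ_{i=1}^n x_i − B, 0}. Then the unique maximizer of f over {0,1}^n is the string x* with x*_i = 1 for i ≤ B and x*_i = 0 for i > B; i.e., f(x) < f(x*) for every x ∈ {0,1}^n with x ≠ x*. -/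
/-!
The weights `2^(n−1−i)` are superincreasing, so the profit is strictly monotone in the
lexicographic order of strings, and `x*` is the lexicographically largest string with at most
`B` ones. A string with more than `B` ones pays a penalty of at least `C = n·2^(n−1) + 1`,
which exceeds every profit, so its fitness is negative while `f(x*) ≥ 0`.
-/

/-- The penalized BinVal fitness
`f(x) = Σ_{i=1}^n 2^{n−i} x_i − C·max{Σ_{i=1}^n x_i − B, 0}` with
`C = n·2^{n−1} + 1` (0-based indexing: the weight of position `i : Fin n` is
`2^{n−1−i}`). -/
noncomputable def binValFitness (n B : ℕ) (x : Fin n → Bool) : ℝ :=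
  (∑ i : Fin n, if x i then (2 : ℝ) ^ (n - 1 - (i : ℕ)) else 0) -
    ((n : ℝ) * 2 ^ (n - 1) + 1) *
      max (((∑ i : Fin n, if x i then 1 else 0 : ℕ) : ℝ) - (B : ℝ)) 0

open Finset

def binVal (n : ℕ) (x : Fin n → Bool) : ℕ :=
  ∑ i : Fin n, if x i then 2 ^ (n - 1 - (i : ℕ)) else 0

def numOnes {n : ℕ} (x : Fin n → Bool) : ℕ :=
  ∑ i : Fin n, if x i then 1 else 0

section BinVal

variable {n : ℕ}

theorem binVal_succ (x : Fin (n + 1) → Bool) :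
    binVal (n + 1) x = (if x 0 then 2 ^ n else 0) + binVal n (Fin.tail x) := by
  simp only [binVal, Fin.sum_univ_succ, Fin.val_zero, Fin.val_succ, Fin.tail]
  congr 2
  funext i
  congr 2
  omega

theorem binVal_lt_two_pow (x : Fin n → Bool) : binVal n x < 2 ^ n := by
  induction n with
  | zero => simp [binVal]
  | succ n ih =>
    have := ih (Fin.tail x)
    rw [binVal_succ, pow_succ]
    split <;> omega

theorem binVal_le_mul_two_pow (x : Fin n → Bool) : binVal n x ≤ n * 2 ^ (n - 1) := by
  have hterm (i : Fin n) : (if x i then 2 ^ (n - 1 - (i : ℕ)) else 0) ≤ 2 ^ (n - 1) := by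
    split
    · exact Nat.pow_le_pow_right two_pos (by omega)
    · exact Nat.zero_le _
  simpa [binVal] using sum_le_card_nsmul univ _ _ fun i _ => hterm i

theorem binVal_lt_binVal_of_toLex_lt {x y : Fin n → Bool} (h : toLex x < toLex y) :
    binVal n x < binVal n y := by
  induction n with
  | zero => obtain ⟨j, -⟩ := h; exact j.elim0
  | succ n ih =>
    obtain ⟨j, hagree, hj⟩ : ∃ j, (∀ i < j, x i = y i) ∧ x j < y j := h
    rw [binVal_succ, binVal_succ]
    cases j using Fin.cases with
    | zero =>
      obtain ⟨hx, hy⟩ := Bool.lt_iff.mp hj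
      have := binVal_lt_two_pow (Fin.tail x)
      simp only [hx, hy, Bool.false_eq_true, if_true, if_false]
      omega
    | succ j =>
      rw [hagree 0 (Fin.succ_pos j)]
      have := ih (x := Fin.tail x) (y := Fin.tail y)
        ⟨j, fun i hi => hagree i.succ (Fin.succ_lt_succ_iff.mpr hi), hj⟩
      omega

end BinVal

section Counting

variable {n : ℕ}

theorem numOnes_eq_card (x : Fin n → Bool) : numOnes x = #{i | x i} :=
  (card_filter _ _).symm

theorem numOnes_prefix {B : ℕ} (hBn : B ≤ n) :
    numOnes (fun i : Fin n => decide ((i : ℕ) < B)) = B := by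
  simp [numOnes_eq_card, Fin.card_filter_val_lt, hBn]

theorem lt_numOnes_of_toLex_prefix_lt {B : ℕ} {x : Fin n → Bool}
    (h : toLex (fun i : Fin n => decide ((i : ℕ) < B)) < toLex x) : B < numOnes x := by
  obtain ⟨j, hagree, hj⟩ :
      ∃ j : Fin n, (∀ i < j, decide ((i : ℕ) < B) = x i) ∧ decide ((j : ℕ) < B) < x j := h
  obtain ⟨hjB, hxj⟩ := Bool.lt_iff.mp hj
  have hBj : B ≤ j := by simpa using hjB
  have hsub : insert j ({i | (i : ℕ) < B} : Finset (Fin n)) ⊆ ({i | x i} : Finset (Fin n)) := by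
    intro i hi
    rcases mem_insert.mp hi with rfl | hi
    · simpa using hxj
    · simp only [mem_filter, mem_univ, true_and] at hi ⊢
      rw [← hagree i (Fin.lt_def.mpr (by omega))]
      simpa using hi
  calc B = #{i : Fin n | (i : ℕ) < B} := by rw [Fin.card_filter_val_lt]; omega
    _ < #(insert j ({i | (i : ℕ) < B} : Finset (Fin n))) := by
      rw [card_insert_of_notMem (by simpa using hBj)]
      omega
    _ ≤ numOnes x := numOnes_eq_card x ▸ card_le_card hsub

end Counting

section Fitness

variable {n B : ℕ}

theorem binValFitness_eq (x : Fin n → Bool) :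
    binValFitness n B x =
      binVal n x - ((n : ℝ) * 2 ^ (n - 1) + 1) * max ((numOnes x : ℝ) - B) 0 := by
  simp [binValFitness, binVal, numOnes]

theorem binValFitness_of_numOnes_le {x : Fin n → Bool} (h : numOnes x ≤ B) :
    binValFitness n B x = binVal n x := by
  have hB : (numOnes x : ℝ) ≤ B := by exact_mod_cast h
  rw [binValFitness_eq, max_eq_right (by linarith), mul_zero, sub_zero]

theorem binValFitness_neg_of_lt_numOnes {x : Fin n → Bool} (h : B < numOnes x) :
    binValFitness n B x < 0 := by
  have hval : (binVal n x : ℝ) ≤ n * 2 ^ (n - 1) := by exact_mod_cast binVal_le_mul_two_pow x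
  have hpen : (1 : ℝ) ≤ max ((numOnes x : ℝ) - B) 0 :=
    le_max_of_le_left (by linarith [show (B : ℝ) + 1 ≤ numOnes x by exact_mod_cast h])
  rw [binValFitness_eq]
  nlinarith [show (0 : ℝ) ≤ n * 2 ^ (n - 1) by positivity]

end Fitness

theorem binVal_unique_optimum_general (n B : ℕ) (hBn : B ≤ n) :
    ∀ x : Fin n → Bool, x ≠ (fun i : Fin n => decide ((i : ℕ) < B)) →
      binValFitness n B x < binValFitness n B (fun i : Fin n => decide ((i : ℕ) < B)) := by
  intro x hx
  rw [binValFitness_of_numOnes_le (numOnes_prefix hBn).le]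
  rcases le_or_gt (numOnes x) B with hfeas | hinfeas
  · rw [binValFitness_of_numOnes_le hfeas, Nat.cast_lt]
    refine binVal_lt_binVal_of_toLex_lt ((toLex_inj.ne.mpr hx).lt_or_gt.resolve_right ?_)
    exact fun hlt => (lt_numOnes_of_toLex_prefix_lt hlt).not_ge hfeas
  · exact (binValFitness_neg_of_lt_numOnes hinfeas).trans_le (Nat.cast_nonneg _)

/-- Let `n ≥ 1`, `1 ≤ B ≤ n`, and let `f` be the penalized
BinVal fitness with budget `B`. Then the unique maximizer of `f` over
`{0,1}ⁿ` is the string `x*` with `x*_i = 1` for `i ≤ B` and `x*_i = 0` for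
`i > B` (0-based: `x* i = 1` iff `i < B`): `f(x) < f(x*)` for every `x ≠ x*`. -/
theorem binVal_unique_optimum (n B : ℕ) (hn : 1 ≤ n) (hB1 : 1 ≤ B) (hBn : B ≤ n) :
    ∀ x : Fin n → Bool, x ≠ (fun i : Fin n => decide ((i : ℕ) < B)) →
      binValFitness n B x < binValFitness n B (fun i : Fin n => decide ((i : ℕ) < B)) :=
  binVal_unique_optimum_general n B hBn
end
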